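/- arXiv:math/0108205 — 6 statements merged into one kernel-verified Lean document; each statement's English description precedes it below -/
import Mathlib

section
/- Let s₁, …, sₙ and t₁, …, tₙ be bounded operators on Hilbert spaces H and K respectively. Then the norm of Σᵢ sᵢ ⊗ tᵢ acting on the Hilbert space tensor product H ⊗ K is at most ‖Σᵢ sᵢsᵢ*‖^{1/2} · ‖Σᵢ tᵢ*tᵢ‖^{1/2}. -/
/-!
For `x = ∑ⱼ ξⱼ ⊗ ηⱼ` and `y = ∑ₖ αₖ ⊗ βₖ` one has `⟪V x, y⟫ = ∑ᵢ ⟪(1 ⊗ tᵢ) x, (sᵢ* ⊗ 1) y⟫`,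
so by Cauchy–Schwarz `|⟪V x, y⟫|² ≤ (∑ᵢ ‖(1 ⊗ tᵢ) x‖²) (∑ᵢ ‖(sᵢ* ⊗ 1) y‖²)`. The first factor is
`⟪x, (1 ⊗ T) x⟫` with `T = ∑ᵢ tᵢ* tᵢ ≤ ‖T‖`, and `b ↦ ⟪x, (1 ⊗ b) x⟫` is monotone since every
positive `b` is some `r* r`; so it is at most `‖T‖ ‖x‖²`, and symmetrically for `y`. Such `x` and
`y` are dense, which bounds `‖V‖`. All of this is computed on representatives `∑ⱼ ξⱼ ⊗ ηⱼ`, so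
`1 ⊗ b` never has to be constructed as an operator.
-/

open scoped InnerProductSpace

open ContinuousLinearMap Finset

lemma Submodule.exists_sum_eq_of_mem_span_range_apply₂ {R M N P : Type*} [CommSemiring R]
    [AddCommMonoid M] [AddCommMonoid N] [AddCommMonoid P] [Module R M] [Module R N] [Module R P]
    (f : M →ₗ[R] N →ₗ[R] P) {z : P}
    (hz : z ∈ span R (Set.range fun p : M × N => f p.1 p.2)) :
    ∃ (m : ℕ) (x : Fin m → M) (y : Fin m → N), ∑ j, f (x j) (y j) = z := by
  obtain ⟨m, c, g, rfl⟩ := mem_span_set'.1 hz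
  choose p hp using fun j => (g j).2
  exact ⟨m, fun j => c j • (p j).1, fun j => (p j).2, sum_congr rfl fun j _ => by simp [hp]⟩

lemma ContinuousLinearMap.opNorm_le_of_dense_of_norm_inner_le {𝕜 E F : Type*} [RCLike 𝕜]
    [NormedAddCommGroup E] [InnerProductSpace 𝕜 E] [NormedAddCommGroup F] [InnerProductSpace 𝕜 F]
    {T : E →L[𝕜] F} {s : Set E} {t : Set F} (hs : Dense s) (ht : Dense t) {C : ℝ} (hC : 0 ≤ C)
    (h : ∀ x ∈ s, ∀ y ∈ t, ‖⟪T x, y⟫_𝕜‖ ≤ C * (‖x‖ * ‖y‖)) : ‖T‖ ≤ C := by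
  have hclosed : IsClosed {q : E × F | ‖⟪T q.1, q.2⟫_𝕜‖ ≤ C * (‖q.1‖ * ‖q.2‖)} :=
    isClosed_le (by fun_prop) (by fun_prop)
  have hall : ∀ x y, ‖⟪T x, y⟫_𝕜‖ ≤ C * (‖x‖ * ‖y‖) := fun x y =>
    hclosed.closure_subset_iff.2 (fun q hq => h _ hq.1 _ hq.2) ((hs.prod ht).closure_eq ▸
      Set.mem_univ (x, y))
  refine opNorm_le_of_re_inner_le hC fun x y hx hy => ?_
  simpa [hx, hy] using (RCLike.re_le_norm _).trans (hall x y)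

lemma norm_sum_inner_le_sqrt_mul_sqrt {𝕜 E ι : Type*} [RCLike 𝕜] [NormedAddCommGroup E]
    [InnerProductSpace 𝕜 E] (s : Finset ι) (u v : ι → E) :
    ‖∑ i ∈ s, ⟪u i, v i⟫_𝕜‖ ≤ √(∑ i ∈ s, ‖u i‖ ^ 2) * √(∑ i ∈ s, ‖v i‖ ^ 2) :=
  (norm_sum_le _ _).trans <| (sum_le_sum fun i _ => norm_inner_le_norm (u i) (v i)).trans <|
    Real.sum_mul_le_sqrt_mul_sqrt _ _ _

section

variable {H K L : Type*}
  [NormedAddCommGroup H] [InnerProductSpace ℂ H]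
  [NormedAddCommGroup K] [InnerProductSpace ℂ K]
  [NormedAddCommGroup L] [InnerProductSpace ℂ L]

def IsInnerTmul (tp : H →ₗ[ℂ] K →ₗ[ℂ] L) : Prop :=
  ∀ (ξ ξ' : H) (η η' : K), ⟪tp ξ η, tp ξ' η'⟫_ℂ = ⟪ξ, ξ'⟫_ℂ * ⟪η, η'⟫_ℂ

namespace IsInnerTmul

variable {tp : H →ₗ[ℂ] K →ₗ[ℂ] L}

lemma flip (htp : IsInnerTmul tp) : IsInnerTmul tp.flip := fun η η' ξ ξ' => by
  rw [LinearMap.flip_apply, LinearMap.flip_apply, htp, mul_comm]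

lemma inner_sum_sum (htp : IsInnerTmul tp) {ι κ : Type*} [Fintype ι] [Fintype κ]
    (ξ : ι → H) (η : ι → K) (α : κ → H) (β : κ → K) :
    ⟪∑ j, tp (ξ j) (η j), ∑ k, tp (α k) (β k)⟫_ℂ = ∑ j, ∑ k, ⟪ξ j, α k⟫_ℂ * ⟪η j, β k⟫_ℂ := by
  rw [sum_inner]
  simp only [inner_sum, htp _ _ _ _]

lemma inner_sum_apply_left [CompleteSpace H] (htp : IsInnerTmul tp) {ι κ : Type*} [Fintype ι]
    [Fintype κ] (a : H →L[ℂ] H) (ξ : ι → H) (η : ι → K) (α : κ → H) (β : κ → K) :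
    ⟪∑ j, tp (a (ξ j)) (η j), ∑ k, tp (α k) (β k)⟫_ℂ =
      ⟪∑ j, tp (ξ j) (η j), ∑ k, tp (adjoint a (α k)) (β k)⟫_ℂ := by
  simp only [htp.inner_sum_sum, adjoint_inner_right]

variable {ι : Type*} [Fintype ι]

/-- `b ↦ (1 ⊗ b) (∑ⱼ ξⱼ ⊗ ηⱼ)`, computed on the given representative. -/
def sumTmulRight (tp : H →ₗ[ℂ] K →ₗ[ℂ] L) (ξ : ι → H) (η : ι → K) : (K →L[ℂ] K) →ₗ[ℂ] L where
  toFun b := ∑ j, tp (ξ j) (b (η j))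
  map_add' b c := by simp only [add_apply, map_add, sum_add_distrib]
  map_smul' z b := by simp only [smul_apply, map_smul, smul_sum, RingHom.id_apply]

@[simp]
lemma sumTmulRight_apply (ξ : ι → H) (η : ι → K) (b : K →L[ℂ] K) :
    sumTmulRight tp ξ η b = ∑ j, tp (ξ j) (b (η j)) := rfl

lemma inner_sumTmulRight [CompleteSpace K] (htp : IsInnerTmul tp) (ξ : ι → H) (η : ι → K)
    (a c : K →L[ℂ] K) :
    ⟪sumTmulRight tp ξ η a, sumTmulRight tp ξ η c⟫_ℂ =
      ⟪sumTmulRight tp ξ η 1, sumTmulRight tp ξ η (adjoint a ∘L c)⟫_ℂ := by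
  simp only [sumTmulRight_apply, htp.inner_sum_sum, comp_apply, one_apply_eq_self,
    adjoint_inner_right]

lemma re_inner_sumTmulRight_nonneg [CompleteSpace K] (htp : IsInnerTmul tp) (ξ : ι → H)
    (η : ι → K) {b : K →L[ℂ] K} (hb : 0 ≤ b) :
    0 ≤ RCLike.re ⟪sumTmulRight tp ξ η 1, sumTmulRight tp ξ η b⟫_ℂ := by
  obtain ⟨r, rfl⟩ := CStarAlgebra.nonneg_iff_eq_star_mul_self.1 hb
  rw [star_eq_adjoint, ContinuousLinearMap.mul_def, ← htp.inner_sumTmulRight]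
  exact inner_self_nonneg

lemma sum_norm_sq_sum_apply_right_le [CompleteSpace K] (htp : IsInnerTmul tp) {κ : Type*}
    [Fintype κ] (ξ : ι → H) (η : ι → K) (a : κ → K →L[ℂ] K) :
    ∑ i, ‖∑ j, tp (ξ j) (a i (η j))‖ ^ 2 ≤
      ‖∑ i, adjoint (a i) ∘L a i‖ * ‖∑ j, tp (ξ j) (η j)‖ ^ 2 := by
  set T := ∑ i, adjoint (a i) ∘L a i
  set X := sumTmulRight tp ξ η
  have hT : 0 ≤ T := sum_nonneg fun i _ => by
    simpa only [star_eq_adjoint, ContinuousLinearMap.mul_def] using star_mul_self_nonneg (a i)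
  have hle : T ≤ ‖T‖ • 1 := by
    simpa only [Algebra.algebraMap_eq_smul_one] using hT.isSelfAdjoint.le_algebraMap_norm_self
  calc ∑ i, ‖∑ j, tp (ξ j) (a i (η j))‖ ^ 2 = ∑ i, RCLike.re ⟪X (a i), X (a i)⟫_ℂ := by
        simp only [X, sumTmulRight_apply, inner_self_eq_norm_sq]
    _ = RCLike.re ⟪X 1, X T⟫_ℂ := by
        rw [map_sum, inner_sum, map_sum]
        exact sum_congr rfl fun i _ => by rw [htp.inner_sumTmulRight]
    _ ≤ RCLike.re ⟪X 1, X (‖T‖ • 1)⟫_ℂ := by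
        simpa only [map_sub, inner_sub_right, sub_nonneg] using
          htp.re_inner_sumTmulRight_nonneg ξ η (sub_nonneg.2 hle)
    _ = ‖T‖ * ‖∑ j, tp (ξ j) (η j)‖ ^ 2 := by
        rw [X.map_smul_of_tower, RCLike.real_smul_eq_coe_smul (K := ℂ), inner_smul_real_right,
          RCLike.smul_re, inner_self_eq_norm_sq]
        rfl

lemma sum_norm_sq_sum_apply_left_le [CompleteSpace H] (htp : IsInnerTmul tp) {κ : Type*}
    [Fintype κ] (α : ι → H) (β : ι → K) (a : κ → H →L[ℂ] H) :
    ∑ i, ‖∑ k, tp (a i (α k)) (β k)‖ ^ 2 ≤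
      ‖∑ i, adjoint (a i) ∘L a i‖ * ‖∑ k, tp (α k) (β k)‖ ^ 2 :=
  htp.flip.sum_norm_sq_sum_apply_right_le β α a

lemma norm_inner_apply_sum_le [CompleteSpace H] [CompleteSpace K] (htp : IsInnerTmul tp)
    {ν κ : Type*} [Fintype ν] [Fintype κ] (s : ν → H →L[ℂ] H) (t : ν → K →L[ℂ] K)
    (V : L →ₗ[ℂ] L) (hV : ∀ (ξ : H) (η : K), V (tp ξ η) = ∑ i, tp (s i ξ) (t i η))
    (ξ : ι → H) (η : ι → K) (α : κ → H) (β : κ → K) :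
    ‖⟪V (∑ j, tp (ξ j) (η j)), ∑ k, tp (α k) (β k)⟫_ℂ‖ ≤
      √‖∑ i, s i ∘L adjoint (s i)‖ * √‖∑ i, adjoint (t i) ∘L t i‖ *
        (‖∑ j, tp (ξ j) (η j)‖ * ‖∑ k, tp (α k) (β k)‖) := by
  have hsplit : ⟪V (∑ j, tp (ξ j) (η j)), ∑ k, tp (α k) (β k)⟫_ℂ =
      ∑ i, ⟪∑ j, tp (ξ j) (t i (η j)), ∑ k, tp (adjoint (s i) (α k)) (β k)⟫_ℂ := by
    simp only [map_sum, hV]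
    rw [sum_comm, sum_inner]
    exact sum_congr rfl fun i _ => htp.inner_sum_apply_left (s i) ξ (fun j => t i (η j)) α β
  have hleft := htp.sum_norm_sq_sum_apply_left_le α β fun i => adjoint (s i)
  simp only [adjoint_adjoint] at hleft
  calc _ ≤ √(∑ i, ‖∑ j, tp (ξ j) (t i (η j))‖ ^ 2) *
        √(∑ i, ‖∑ k, tp (adjoint (s i) (α k)) (β k)‖ ^ 2) :=
        hsplit ▸ norm_sum_inner_le_sqrt_mul_sqrt _ _ _
    _ ≤ √(‖∑ i, adjoint (t i) ∘L t i‖ * ‖∑ j, tp (ξ j) (η j)‖ ^ 2) *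
        √(‖∑ i, s i ∘L adjoint (s i)‖ * ‖∑ k, tp (α k) (β k)‖ ^ 2) := by
        gcongr
        exact htp.sum_norm_sq_sum_apply_right_le ξ η t
    _ = _ := by
        rw [Real.sqrt_mul (norm_nonneg _), Real.sqrt_mul (norm_nonneg _),
          Real.sqrt_sq (norm_nonneg _), Real.sqrt_sq (norm_nonneg _)]
        ring

end IsInnerTmul
end

theorem norm_sum_tensor_le_general {H K L : Type*}
    [NormedAddCommGroup H] [InnerProductSpace ℂ H] [CompleteSpace H]
    [NormedAddCommGroup K] [InnerProductSpace ℂ K] [CompleteSpace K]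
    [NormedAddCommGroup L] [InnerProductSpace ℂ L]
    (tp : H →ₗ[ℂ] K →ₗ[ℂ] L)
    (htp : ∀ (ξ ξ' : H) (η η' : K),
      ⟪tp ξ η, tp ξ' η'⟫_ℂ = ⟪ξ, ξ'⟫_ℂ * ⟪η, η'⟫_ℂ)
    (hdense : (Submodule.span ℂ
        (Set.range fun p : H × K => tp p.1 p.2)).topologicalClosure = ⊤)
    (n : ℕ) (s : Fin n → H →L[ℂ] H) (t : Fin n → K →L[ℂ] K)
    (V : L →L[ℂ] L)
    (hV : ∀ (ξ : H) (η : K), V (tp ξ η) = ∑ i, tp (s i ξ) (t i η)) :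
    ‖V‖ ≤ Real.sqrt ‖∑ i, (s i) ∘L (ContinuousLinearMap.adjoint (s i))‖ *
          Real.sqrt ‖∑ i, (ContinuousLinearMap.adjoint (t i)) ∘L (t i)‖ := by
  have hM := Submodule.dense_iff_topologicalClosure_eq_top.2 hdense
  refine opNorm_le_of_dense_of_norm_inner_le hM hM (by positivity) fun x hx y hy => ?_
  obtain ⟨m, ξ, η, rfl⟩ := Submodule.exists_sum_eq_of_mem_span_range_apply₂ tp hx
  obtain ⟨p, α, β, rfl⟩ := Submodule.exists_sum_eq_of_mem_span_range_apply₂ tp hy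
  exact IsInnerTmul.norm_inner_apply_sum_le htp s t V hV ξ η α β

/-- Let `s₁, …, sₙ ∈ B(H)` and `t₁, …, tₙ ∈ B(K)`.  The Hilbert-space tensor product
`H ⊗₂ K` is axiomatized as a Hilbert space `L` together with a bilinear map
`tp : H → K → L` satisfying `⟪tp ξ η, tp ξ' η'⟫ = ⟪ξ, ξ'⟫ ⟪η, η'⟫` and having dense
linear span.  If `V ∈ B(L)` acts as `Σᵢ sᵢ ⊗ tᵢ` on elementary tensors, then
`‖Σᵢ sᵢ ⊗ tᵢ‖ ≤ ‖Σᵢ sᵢ sᵢ*‖^{1/2} ‖Σᵢ tᵢ* tᵢ‖^{1/2}`. -/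
theorem norm_sum_tensor_le {H K L : Type*}
    [NormedAddCommGroup H] [InnerProductSpace ℂ H] [CompleteSpace H]
    [NormedAddCommGroup K] [InnerProductSpace ℂ K] [CompleteSpace K]
    [NormedAddCommGroup L] [InnerProductSpace ℂ L] [CompleteSpace L]
    (tp : H →ₗ[ℂ] K →ₗ[ℂ] L)
    (htp : ∀ (ξ ξ' : H) (η η' : K),
      ⟪tp ξ η, tp ξ' η'⟫_ℂ = ⟪ξ, ξ'⟫_ℂ * ⟪η, η'⟫_ℂ)
    (hdense : (Submodule.span ℂ
        (Set.range fun p : H × K => tp p.1 p.2)).topologicalClosure = ⊤)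
    (n : ℕ) (s : Fin n → H →L[ℂ] H) (t : Fin n → K →L[ℂ] K)
    (V : L →L[ℂ] L)
    (hV : ∀ (ξ : H) (η : K), V (tp ξ η) = ∑ i, tp (s i ξ) (t i η)) :
    ‖V‖ ≤ Real.sqrt ‖∑ i, (s i) ∘L (ContinuousLinearMap.adjoint (s i))‖ *
          Real.sqrt ‖∑ i, (ContinuousLinearMap.adjoint (t i)) ∘L (t i)‖ :=
  norm_sum_tensor_le_general tp htp hdense n s t V hV
end

section
/- With {eᵢ}, {e′ᵢ} an orthonormal system in H, set xᵢ = λᵢ^{1/2} ℓ(eᵢ) + λᵢ^{-1/2} ℓ(e′ᵢ)* and yⱼ = λⱼ^{1/2} r(e′ⱼ) + λⱼ^{-1/2} r(eⱼ)* on the full Fock space F(H), with λᵢ > 0. Then the families double-commute: xᵢ yⱼ = yⱼ xᵢ and xᵢ* yⱼ = yⱼ xᵢ* for all i, j. -/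
/-! The (algebraic) full Fock space over `H = ℓ²(I ⊕ I)`, whose orthonormal basis splits
as `{eᵢ} ∪ {e′ᵢ}` (`eᵢ = Sum.inl i`, `e′ᵢ = Sum.inr i`), is realized on its canonical
dense subspace `List (I ⊕ I) →₀ ℂ`, with creation/annihilation operators acting
algebraically. -/

noncomputable section

/-- Algebraic full Fock space over `ℓ²(ι)`. -/
abbrev Fock (ι : Type*) := List ι →₀ ℂ

/-- Left creation by a basis vector. -/
def creL {ι : Type*} (i : ι) : Fock ι →ₗ[ℂ] Fock ι :=
  Finsupp.lmapDomain ℂ ℂ (List.cons i)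

/-- Left annihilation (adjoint of left creation). -/
def annL {ι : Type*} (i : ι) : Fock ι →ₗ[ℂ] Fock ι :=
  Finsupp.lcomapDomain (List.cons i) List.cons_injective

/-- Right creation by a basis vector. -/
def creR {ι : Type*} (i : ι) : Fock ι →ₗ[ℂ] Fock ι :=
  Finsupp.lmapDomain ℂ ℂ (fun w => w ++ [i])

/-- Right annihilation (adjoint of right creation). -/
def annR {ι : Type*} (i : ι) : Fock ι →ₗ[ℂ] Fock ι :=
  Finsupp.lcomapDomain (fun w => w ++ [i]) (List.append_left_injective [i])

variable {I : Type*} (lam : I → ℝ)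

/-- The generalized circular element `xᵢ = λᵢ^{1/2} ℓ(eᵢ) + λᵢ^{-1/2} ℓ(e′ᵢ)*`. -/
def X (i : I) : Fock (I ⊕ I) →ₗ[ℂ] Fock (I ⊕ I) :=
  (Real.sqrt (lam i) : ℂ) • creL (Sum.inl i) +
    ((Real.sqrt (lam i) : ℂ))⁻¹ • annL (Sum.inr i)

/-- The adjoint `xᵢ* = λᵢ^{1/2} ℓ(eᵢ)* + λᵢ^{-1/2} ℓ(e′ᵢ)`. -/
def Xstar (i : I) : Fock (I ⊕ I) →ₗ[ℂ] Fock (I ⊕ I) :=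
  (Real.sqrt (lam i) : ℂ) • annL (Sum.inl i) +
    ((Real.sqrt (lam i) : ℂ))⁻¹ • creL (Sum.inr i)

/-- The generalized circular element `yⱼ = λⱼ^{1/2} r(e′ⱼ) + λⱼ^{-1/2} r(eⱼ)*`. -/
def Y (j : I) : Fock (I ⊕ I) →ₗ[ℂ] Fock (I ⊕ I) :=
  (Real.sqrt (lam j) : ℂ) • creR (Sum.inr j) +
    ((Real.sqrt (lam j) : ℂ))⁻¹ • annR (Sum.inl j)

/-! Left and right operators act at opposite ends of a word, so they commute except on the
vacuum, where one letter is both first and last: `ℓ(ξ)* r(η) = r(η) ℓ(ξ)* + ⟨η, ξ⟩ P_Ω` and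
`r(ξ)* ℓ(η) = ℓ(η) r(ξ)* + ⟨η, ξ⟩ P_Ω`. In `xᵢ yᵢ - yᵢ xᵢ` these two defects enter with the
coefficients `-λᵢ^{1/2} λᵢ^{-1/2}` and `+λᵢ^{-1/2} λᵢ^{1/2}` and cancel; in `xᵢ* yⱼ` only
mutually orthogonal vectors meet. -/

section FockOperators

variable {ι : Type*}

def vacuumProj : Fock ι →ₗ[ℂ] Fock ι :=
  (Finsupp.lsingle []).comp (Finsupp.lapply [])

@[simp]
lemma vacuumProj_apply_nil (f : Fock ι) : vacuumProj f [] = f [] := by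
  simp [vacuumProj]

lemma vacuumProj_apply_of_ne_nil (f : Fock ι) {w : List ι} (hw : w ≠ []) :
    vacuumProj f w = 0 := by
  simp [vacuumProj, Finsupp.single_eq_of_ne' hw.symm]

@[simp]
lemma annL_apply (a : ι) (f : Fock ι) (w : List ι) : annL a f w = f (a :: w) := rfl

@[simp]
lemma annR_apply (a : ι) (f : Fock ι) (w : List ι) : annR a f w = f (w ++ [a]) := rfl

@[simp]
lemma creL_single (a : ι) (w : List ι) (c : ℂ) :
    creL a (Finsupp.single w c) = Finsupp.single (a :: w) c := by
  simp [creL]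

@[simp]
lemma creR_single (a : ι) (w : List ι) (c : ℂ) :
    creR a (Finsupp.single w c) = Finsupp.single (w ++ [a]) c := by
  simp [creR]

@[simp]
lemma creL_apply_nil (a : ι) (f : Fock ι) : creL a f [] = 0 :=
  Finsupp.mapDomain_of_notMem_range _ _ (by simp)

@[simp]
lemma creR_apply_nil (a : ι) (f : Fock ι) : creR a f [] = 0 :=
  Finsupp.mapDomain_of_notMem_range _ _ (by simp)

lemma creL_apply_cons [DecidableEq ι] (a b : ι) (f : Fock ι) (w : List ι) :
    creL a f (b :: w) = if b = a then f w else 0 := by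
  split_ifs with h
  · subst h
    exact Finsupp.mapDomain_apply List.cons_injective f w
  · exact Finsupp.mapDomain_of_notMem_range _ _ (by simpa [eq_comm] using h)

lemma creR_apply_concat [DecidableEq ι] (a b : ι) (f : Fock ι) (w : List ι) :
    creR a f (w ++ [b]) = if b = a then f w else 0 := by
  split_ifs with h
  · subst h
    exact Finsupp.mapDomain_apply (List.append_left_injective [b]) f w
  · refine Finsupp.mapDomain_of_notMem_range _ _ ?_
    rintro ⟨u, hu⟩
    exact h (List.singleton_inj.mp (List.append_inj' hu rfl).2).symm

lemma creL_comp_creR (a b : ι) : creL a ∘ₗ creR b = creR b ∘ₗ creL a :=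
  Finsupp.lhom_ext fun w c => by simp

lemma annL_comp_annR (a b : ι) : annL a ∘ₗ annR b = annR b ∘ₗ annL a :=
  LinearMap.ext fun _ => Finsupp.ext fun _ => rfl

lemma annL_comp_creR [DecidableEq ι] (a b : ι) :
    annL a ∘ₗ creR b = creR b ∘ₗ annL a + if a = b then vacuumProj else 0 := by
  refine LinearMap.ext fun f => Finsupp.ext fun w => ?_
  rcases w.eq_nil_or_concat with rfl | ⟨v, c, rfl⟩
  · rw [LinearMap.comp_apply, annL_apply, ← List.nil_append [a], creR_apply_concat]
    split_ifs <;> simp [*]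
  · rw [List.concat_eq_append, LinearMap.comp_apply, annL_apply, ← List.cons_append,
      creR_apply_concat]
    split_ifs <;> simp [creR_apply_concat, vacuumProj_apply_of_ne_nil, *]

lemma annR_comp_creL [DecidableEq ι] (a b : ι) :
    annR a ∘ₗ creL b = creL b ∘ₗ annR a + if a = b then vacuumProj else 0 := by
  refine LinearMap.ext fun f => Finsupp.ext fun w => ?_
  cases w with
  | nil => split_ifs <;> simp [creL_apply_cons, *]
  | cons c v => split_ifs <;> simp [creL_apply_cons, vacuumProj_apply_of_ne_nil]

end FockOperators

theorem generalized_circular_double_commute (i j : I) :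
    (X lam i).comp (Y lam j) = (Y lam j).comp (X lam i) ∧
    (Xstar lam i).comp (Y lam j) = (Y lam j).comp (Xstar lam i) := by
  classical
  simp only [X, Xstar, Y, LinearMap.add_comp, LinearMap.comp_add, LinearMap.smul_comp,
    LinearMap.comp_smul, creL_comp_creR, annL_comp_annR, annL_comp_creR, annR_comp_creL]
  refine ⟨?_, ?_⟩
  · by_cases hij : i = j
    · subst hij
      simp only [if_true]
      module
    · simp only [Sum.inr.injEq, Sum.inl.injEq, hij, Ne.symm hij, if_false, add_zero]
      module
  · simp only [reduceCtorEq, if_false, add_zero]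
    module

end
end

section
/- Let aᵢ be elements of a C*-algebra A and λᵢ > 0, and let xᵢ = λᵢ^{1/2}ℓᵢ + λᵢ^{-1/2}ℓ′ᵢ* be generalized circular elements on Fock space. Then ‖Σᵢ aᵢ ⊗ xᵢ‖ ≤ ‖Σᵢ λᵢ aᵢ*aᵢ‖^{1/2} + ‖Σᵢ λᵢ^{-1} aᵢaᵢ*‖^{1/2} in the minimal tensor product norm (i.e., as operators on H_A ⊗ F(H) when A ⊆ B(H_A)). -/
/-!
Extend `tp` to an isometry `T` from the algebraic Hilbert tensor product `HA ⊗[ℂ] F` onto a dense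
subspace of `L`. Then `V ∘ T = T ∘ (P + Q)` with `P = Σ (√λᵢ aᵢ) ⊗ ℓᵢ` and
`Q = Σ (λᵢ^{-1/2} aᵢ) ⊗ ℓ′ᵢ*`, so `‖V‖ ≤ ‖P‖ + ‖Q‖`. Since `ℓᵢ* ℓⱼ = δᵢⱼ`, we get
`P* P = (Σ λᵢ aᵢ* aᵢ) ⊗ 1`, whence `‖P‖² ≤ ‖Σ λᵢ aᵢ* aᵢ‖`; and `‖Q‖ = ‖Q*‖` with
`Q* = Σ (λᵢ^{-1/2} aᵢ*) ⊗ ℓ′ᵢ` of the same shape as `P`.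
-/

open scoped InnerProductSpace TensorProduct
open ContinuousLinearMap TensorProduct

/- `HA ⊗[ℂ] F` is not complete, so `adjoint` is not available on it: we work with formal
adjoints, given by the hypothesis `∀ x y, ⟪A x, y⟫ = ⟪x, B y⟫`. -/
section FormalAdjoint

variable {𝕜 X Y : Type*} [RCLike 𝕜] [NormedAddCommGroup X] [InnerProductSpace 𝕜 X]
  [NormedAddCommGroup Y] [InnerProductSpace 𝕜 Y] {A : X →L[𝕜] Y} {B : Y →L[𝕜] X}

theorem ContinuousLinearMap.opNorm_sq_le_norm_comp_of_inner_eq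
    (h : ∀ x y, ⟪A x, y⟫_𝕜 = ⟪x, B y⟫_𝕜) : ‖A‖ ^ 2 ≤ ‖B ∘L A‖ := by
  have hA : ∀ x, ‖A x‖ ^ 2 ≤ ‖B ∘L A‖ * ‖x‖ ^ 2 := fun x => calc
    ‖A x‖ ^ 2 = RCLike.re ⟪x, (B ∘L A) x⟫_𝕜 := by
      rw [comp_apply, ← h, inner_self_eq_norm_sq]
    _ ≤ ‖x‖ * ‖(B ∘L A) x‖ := re_inner_le_norm _ _
    _ ≤ ‖x‖ * (‖B ∘L A‖ * ‖x‖) := by gcongr; exact le_opNorm _ _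
    _ = ‖B ∘L A‖ * ‖x‖ ^ 2 := by ring
  have hA' : ‖A‖ ≤ √‖B ∘L A‖ := A.opNorm_le_bound (by positivity) fun x => by
    rw [← Real.sqrt_sq (norm_nonneg x), ← Real.sqrt_mul (norm_nonneg _)]
    exact Real.le_sqrt_of_sq_le (hA x)
  exact (Real.le_sqrt (norm_nonneg _) (norm_nonneg _)).1 hA'

theorem ContinuousLinearMap.opNorm_le_of_inner_eq
    (h : ∀ x y, ⟪A x, y⟫_𝕜 = ⟪x, B y⟫_𝕜) : ‖A‖ ≤ ‖B‖ := by
  have := (opNorm_sq_le_norm_comp_of_inner_eq h).trans (opNorm_comp_le B A)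
  nlinarith [norm_nonneg A, norm_nonneg B]

end FormalAdjoint

theorem ContinuousLinearMap.opNorm_le_of_comp_eq_of_denseRange {𝕜 X Y L M : Type*}
    [NontriviallyNormedField 𝕜] [SeminormedAddCommGroup X] [NormedSpace 𝕜 X]
    [SeminormedAddCommGroup Y] [NormedSpace 𝕜 Y] [SeminormedAddCommGroup L] [NormedSpace 𝕜 L]
    [SeminormedAddCommGroup M] [NormedSpace 𝕜 M]
    {S : X →ₗᵢ[𝕜] L} (hS : DenseRange S) (T : Y →ₗᵢ[𝕜] M) (V : L →L[𝕜] M) (W : X →L[𝕜] Y)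
    (h : ∀ x, V (S x) = T (W x)) : ‖V‖ ≤ ‖W‖ :=
  V.opNorm_le_bound (norm_nonneg _) fun v =>
    hS.induction_on v (isClosed_le (by fun_prop) (by fun_prop)) fun x => by
      rw [h, T.norm_map, S.norm_map]
      exact W.le_opNorm x

section Scalar

variable {𝕜 E F : Type*} [RCLike 𝕜]
  [NormedAddCommGroup E] [InnerProductSpace 𝕜 E] [CompleteSpace E]
  [NormedAddCommGroup F] [InnerProductSpace 𝕜 F] [CompleteSpace F]

theorem ContinuousLinearMap.adjoint_smul_comp_smul (r : ℝ) (A : E →L[𝕜] F) :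
    ((r : 𝕜) • A).adjoint ∘L ((r : 𝕜) • A) = ((r ^ 2 : ℝ) : 𝕜) • (A.adjoint ∘L A) := by
  simp [map_smulₛₗ, pow_two, mul_smul]

theorem ContinuousLinearMap.smul_comp_adjoint_smul (r : ℝ) (A : E →L[𝕜] F) :
    ((r : 𝕜) • A) ∘L ((r : 𝕜) • A).adjoint = ((r ^ 2 : ℝ) : 𝕜) • (A ∘L A.adjoint) := by
  simp [map_smulₛₗ, pow_two, mul_smul]

end Scalar

namespace TensorProduct

variable {𝕜 E F G H L : Type*} [RCLike 𝕜]
  [NormedAddCommGroup E] [InnerProductSpace 𝕜 E] [NormedAddCommGroup F] [InnerProductSpace 𝕜 F]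
  [NormedAddCommGroup G] [InnerProductSpace 𝕜 G] [NormedAddCommGroup H] [InnerProductSpace 𝕜 H]
  [NormedAddCommGroup L] [InnerProductSpace 𝕜 L]

section Lift

variable (tp : E →ₗ[𝕜] F →ₗ[𝕜] L)
  (htp : ∀ ξ ξ' η η', ⟪tp ξ η, tp ξ' η'⟫_𝕜 = ⟪ξ, ξ'⟫_𝕜 * ⟪η, η'⟫_𝕜)
include htp

theorem inner_lift_lift (x y : E ⊗[𝕜] F) : ⟪lift tp x, lift tp y⟫_𝕜 = ⟪x, y⟫_𝕜 := by
  induction x using TensorProduct.induction_on with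
  | zero => simp
  | add x x' hx hx' => rw [map_add, inner_add_left, hx, hx', inner_add_left]
  | tmul ξ η =>
    induction y using TensorProduct.induction_on with
    | zero => simp
    | add y y' hy hy' => rw [map_add, inner_add_right, hy, hy', inner_add_right]
    | tmul ξ' η' => simp [htp]

noncomputable def liftIsometry : E ⊗[𝕜] F →ₗᵢ[𝕜] L :=
  (lift tp).isometryOfInner (inner_lift_lift tp htp)

@[simp] theorem liftIsometry_tmul (ξ : E) (η : F) : liftIsometry tp htp (ξ ⊗ₜ η) = tp ξ η :=
  lift.tmul ξ η

theorem denseRange_liftIsometry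
    (hdense : (Submodule.span 𝕜 (Set.range fun p : E × F => tp p.1 p.2)).topologicalClosure = ⊤) :
    DenseRange (liftIsometry tp htp) := by
  refine (Submodule.dense_iff_topologicalClosure_eq_top.2 hdense).mono
    (Submodule.span_le (p := LinearMap.range (lift tp)).2 ?_)
  rintro _ ⟨p, rfl⟩
  exact ⟨p.1 ⊗ₜ p.2, lift.tmul _ _⟩

end Lift

theorem mapL_sum_left {ι : Type*} (s : Finset ι) (f : ι → E →L[𝕜] F) (g : G →L[𝕜] H) :
    mapL (∑ i ∈ s, f i) g = ∑ i ∈ s, mapL (f i) g := by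
  classical
  induction s using Finset.induction_on with
  | empty => simp
  | insert i s hi ih => rw [Finset.sum_insert hi, Finset.sum_insert hi, mapL_add_left, ih]

variable [CompleteSpace E] [CompleteSpace F] [CompleteSpace G] [CompleteSpace H] {ι : Type*}

theorem inner_mapL_apply (f : E →L[𝕜] F) (g : G →L[𝕜] H) (x : E ⊗[𝕜] G) (y : F ⊗[𝕜] H) :
    ⟪mapL f g x, y⟫_𝕜 = ⟪x, mapL f.adjoint g.adjoint y⟫_𝕜 := by
  induction x using TensorProduct.induction_on with
  | zero => simp
  | add x x' hx hx' => rw [map_add, inner_add_left, hx, hx', inner_add_left]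
  | tmul ξ η =>
    induction y using TensorProduct.induction_on with
    | zero => simp
    | add y y' hy hy' => rw [inner_add_right, hy, hy', map_add, inner_add_right]
    | tmul ξ' η' => simp [adjoint_inner_right]

theorem inner_sum_mapL_apply (s : Finset ι) (f : ι → E →L[𝕜] F) (g : ι → G →L[𝕜] H)
    (x : E ⊗[𝕜] G) (y : F ⊗[𝕜] H) :
    ⟪(∑ i ∈ s, mapL (f i) (g i)) x, y⟫_𝕜
      = ⟪x, (∑ i ∈ s, mapL (f i).adjoint (g i).adjoint) y⟫_𝕜 := by
  simp only [sum_apply, sum_inner, inner_sum, inner_mapL_apply]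

theorem norm_sum_mapL_le [DecidableEq ι] (s : Finset ι) (c : ι → E →L[𝕜] F)
    (e : ι → G →L[𝕜] H) (he : ∀ i ∈ s, ∀ j ∈ s, (e i).adjoint ∘L e j = if i = j then 1 else 0) :
    ‖∑ i ∈ s, mapL (c i) (e i)‖ ≤ √‖∑ i ∈ s, (c i).adjoint ∘L c i‖ := by
  have hcomp : (∑ i ∈ s, mapL (c i).adjoint (e i).adjoint) ∘L ∑ i ∈ s, mapL (c i) (e i)
      = mapL (∑ i ∈ s, (c i).adjoint ∘L c i) 1 := by
    rw [mapL_sum_left, finsetSum_comp]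
    refine Finset.sum_congr rfl fun i hi => ?_
    simp_rw [comp_finsetSum, ← mapL_comp]
    rw [Finset.sum_eq_single_of_mem i hi fun j hj hji => by
      rw [he i hi j hj, if_neg hji.symm, mapL_zero_right], he i hi i hi, if_pos rfl]
  refine Real.le_sqrt_of_sq_le ?_
  calc ‖∑ i ∈ s, mapL (c i) (e i)‖ ^ 2
      ≤ ‖(∑ i ∈ s, mapL (c i).adjoint (e i).adjoint) ∘L ∑ i ∈ s, mapL (c i) (e i)‖ :=
        opNorm_sq_le_norm_comp_of_inner_eq (inner_sum_mapL_apply s c e)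
    _ ≤ ‖∑ i ∈ s, (c i).adjoint ∘L c i‖ * ‖(1 : G →L[𝕜] G)‖ := hcomp ▸ norm_mapL_le _ _
    _ ≤ ‖∑ i ∈ s, (c i).adjoint ∘L c i‖ := mul_le_of_le_one_right (norm_nonneg _) norm_id_le

theorem norm_sum_mapL_adjoint_le [DecidableEq ι] (s : Finset ι) (c : ι → E →L[𝕜] F)
    (e : ι → G →L[𝕜] H) (he : ∀ i ∈ s, ∀ j ∈ s, (e i).adjoint ∘L e j = if i = j then 1 else 0) :
    ‖∑ i ∈ s, mapL (c i) (e i).adjoint‖ ≤ √‖∑ i ∈ s, c i ∘L (c i).adjoint‖ := by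
  calc ‖∑ i ∈ s, mapL (c i) (e i).adjoint‖ ≤ ‖∑ i ∈ s, mapL (c i).adjoint (e i)‖ :=
        opNorm_le_of_inner_eq fun x y => by
          simpa only [adjoint_adjoint] using
            inner_sum_mapL_apply s c (fun i => (e i).adjoint) x y
    _ ≤ √‖∑ i ∈ s, c i ∘L (c i).adjoint‖ := by
        simpa only [adjoint_adjoint] using norm_sum_mapL_le s (fun i => (c i).adjoint) e he

end TensorProduct

theorem norm_sum_tensor_generalized_circular_le_general {HA F L : Type*}
    [NormedAddCommGroup HA] [InnerProductSpace ℂ HA] [CompleteSpace HA]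
    [NormedAddCommGroup F] [InnerProductSpace ℂ F] [CompleteSpace F]
    [NormedAddCommGroup L] [InnerProductSpace ℂ L]
    {I : Type*} [DecidableEq I] (s : Finset I)
    (a : I → HA →L[ℂ] HA) (lam : I → ℝ) (hlam : ∀ i, 0 < lam i)
    -- left creation operators for the orthonormal system {eᵢ} ∪ {e′ᵢ}:
    (el el' : I → F →L[ℂ] F)
    (h1 : ∀ i j, (ContinuousLinearMap.adjoint (el i)) ∘L (el j)
        = if i = j then 1 else 0)
    (h2 : ∀ i j, (ContinuousLinearMap.adjoint (el' i)) ∘L (el' j)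
        = if i = j then 1 else 0)
    -- the generalized circular elements xᵢ = λᵢ^{1/2} ℓᵢ + λᵢ^{-1/2} ℓ′ᵢ*:
    (x : I → F →L[ℂ] F)
    (hx : ∀ i, x i = (Real.sqrt (lam i) : ℂ) • el i +
        ((Real.sqrt (lam i) : ℂ))⁻¹ • ContinuousLinearMap.adjoint (el' i))
    -- the tensor product H_A ⊗₂ F(H):
    (tp : HA →ₗ[ℂ] F →ₗ[ℂ] L)
    (htp : ∀ (ξ ξ' : HA) (η η' : F),
      ⟪tp ξ η, tp ξ' η'⟫_ℂ = ⟪ξ, ξ'⟫_ℂ * ⟪η, η'⟫_ℂ)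
    (hdense : (Submodule.span ℂ
        (Set.range fun p : HA × F => tp p.1 p.2)).topologicalClosure = ⊤)
    -- the operator Σᵢ aᵢ ⊗ xᵢ:
    (V : L →L[ℂ] L)
    (hV : ∀ (ξ : HA) (η : F), V (tp ξ η) = ∑ i ∈ s, tp (a i ξ) (x i η)) :
    ‖V‖ ≤
      Real.sqrt ‖∑ i ∈ s, (lam i : ℂ) •
          ((ContinuousLinearMap.adjoint (a i)) ∘L (a i))‖ +
      Real.sqrt ‖∑ i ∈ s, ((lam i : ℂ))⁻¹ •
          ((a i) ∘L (ContinuousLinearMap.adjoint (a i)))‖ := by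
  let T := liftIsometry tp htp
  let P := ∑ i ∈ s, mapL ((√(lam i) : ℂ) • a i) (el i)
  let Q := ∑ i ∈ s, mapL ((((√(lam i))⁻¹ : ℝ) : ℂ) • a i) (el' i).adjoint
  have hVT : V.toLinearMap ∘ₗ T.toLinearMap = T.toLinearMap ∘ₗ (P + Q).toLinearMap :=
    TensorProduct.ext' fun ξ η => by simp [T, P, Q, hV, hx, Finset.sum_add_distrib]
  have hP : ‖P‖ ≤ √‖∑ i ∈ s, (lam i : ℂ) • (a i).adjoint ∘L a i‖ := by
    convert norm_sum_mapL_le s _ el (fun i _ j _ => h1 i j) using 4 with i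
    simpa [Real.sq_sqrt (hlam i).le] using (adjoint_smul_comp_smul (𝕜 := ℂ) √(lam i) (a i)).symm
  have hQ : ‖Q‖ ≤ √‖∑ i ∈ s, (lam i : ℂ)⁻¹ • a i ∘L (a i).adjoint‖ := by
    convert norm_sum_mapL_adjoint_le s _ el' (fun i _ j _ => h2 i j) using 4 with i
    simpa [Real.sq_sqrt (hlam i).le] using
      (smul_comp_adjoint_smul (𝕜 := ℂ) (√(lam i))⁻¹ (a i)).symm
  calc ‖V‖ ≤ ‖P + Q‖ := opNorm_le_of_comp_eq_of_denseRange
        (denseRange_liftIsometry tp htp hdense) T V _ (LinearMap.congr_fun hVT)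
    _ ≤ ‖P‖ + ‖Q‖ := norm_add_le P Q
    _ ≤ _ := add_le_add hP hQ

/-- Let `A ⊆ B(H_A)` be a C*-algebra of operators, `(aᵢ)` a finite family in `A`, and
`xᵢ = λᵢ^{1/2} ℓᵢ + λᵢ^{-1/2} ℓ′ᵢ*` the generalized circular elements built from the
left creation operators `ℓᵢ = ℓ(eᵢ)`, `ℓ′ᵢ = ℓ(e′ᵢ)` of an orthonormal system
`{eᵢ} ∪ {e′ᵢ}` on the full Fock space `F(H)` (axiomatized by the creation relations
`ℓ(u)* ℓ(v) = ⟨v, u⟩ 1`).  The Hilbert-space tensor product `H_A ⊗₂ F(H)` is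
axiomatized by a bilinear map `tp` with `⟪tp ξ η, tp ξ' η'⟫ = ⟪ξ, ξ'⟫⟪η, η'⟫` and dense
span.  Then `‖Σᵢ aᵢ ⊗ xᵢ‖ ≤ ‖Σᵢ λᵢ aᵢ* aᵢ‖^{1/2} + ‖Σᵢ λᵢ⁻¹ aᵢ aᵢ*‖^{1/2}`. -/
theorem norm_sum_tensor_generalized_circular_le {HA F L : Type*}
    [NormedAddCommGroup HA] [InnerProductSpace ℂ HA] [CompleteSpace HA]
    [NormedAddCommGroup F] [InnerProductSpace ℂ F] [CompleteSpace F]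
    [NormedAddCommGroup L] [InnerProductSpace ℂ L] [CompleteSpace L]
    {I : Type*} [DecidableEq I] (s : Finset I)
    (a : I → HA →L[ℂ] HA) (lam : I → ℝ) (hlam : ∀ i, 0 < lam i)
    -- left creation operators for the orthonormal system {eᵢ} ∪ {e′ᵢ}:
    (el el' : I → F →L[ℂ] F)
    (h1 : ∀ i j, (ContinuousLinearMap.adjoint (el i)) ∘L (el j)
        = if i = j then 1 else 0)
    (h2 : ∀ i j, (ContinuousLinearMap.adjoint (el' i)) ∘L (el' j)
        = if i = j then 1 else 0)
    (h3 : ∀ i j, (ContinuousLinearMap.adjoint (el i)) ∘L (el' j) = 0)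
    -- the generalized circular elements xᵢ = λᵢ^{1/2} ℓᵢ + λᵢ^{-1/2} ℓ′ᵢ*:
    (x : I → F →L[ℂ] F)
    (hx : ∀ i, x i = (Real.sqrt (lam i) : ℂ) • el i +
        ((Real.sqrt (lam i) : ℂ))⁻¹ • ContinuousLinearMap.adjoint (el' i))
    -- the tensor product H_A ⊗₂ F(H):
    (tp : HA →ₗ[ℂ] F →ₗ[ℂ] L)
    (htp : ∀ (ξ ξ' : HA) (η η' : F),
      ⟪tp ξ η, tp ξ' η'⟫_ℂ = ⟪ξ, ξ'⟫_ℂ * ⟪η, η'⟫_ℂ)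
    (hdense : (Submodule.span ℂ
        (Set.range fun p : HA × F => tp p.1 p.2)).topologicalClosure = ⊤)
    -- the operator Σᵢ aᵢ ⊗ xᵢ:
    (V : L →L[ℂ] L)
    (hV : ∀ (ξ : HA) (η : F), V (tp ξ η) = ∑ i ∈ s, tp (a i ξ) (x i η)) :
    ‖V‖ ≤
      Real.sqrt ‖∑ i ∈ s, (lam i : ℂ) •
          ((ContinuousLinearMap.adjoint (a i)) ∘L (a i))‖ +
      Real.sqrt ‖∑ i ∈ s, ((lam i : ℂ))⁻¹ •
          ((a i) ∘L (ContinuousLinearMap.adjoint (a i)))‖ :=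
  norm_sum_tensor_generalized_circular_le_general s a lam hlam el el' h1 h2 x hx tp htp hdense V hV
end

section
/- Let (λᵢ)ᵢ be nonnegative reals summing to 1 and suppose for every matrix x one has ‖u(x)‖² ≤ K²(Σᵢⱼ λᵢ|xᵢⱼ|² · Σᵢⱼ λⱼ|xᵢⱼ|²)^{1/2}. Fix t ≥ 2 and let S(2) = {(i,j) : λᵢ > t²λⱼ}. Then for the truncation u₂(x) = u(Σ_{(i,j)∈S(2)} xᵢⱼ eᵢⱼ) one has ‖u₂(x)‖² ≤ K² t^{-1} Σᵢⱼ λᵢ |xᵢⱼ|². -/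
open Finset

/-! On `S(2)` the column weight satisfies `λⱼ ≤ t⁻² λᵢ`, so for a matrix supported there the
column-weighted square norm is at most `t⁻²` times the row-weighted one. The geometric mean of
the two is then at most `t⁻¹` times the row-weighted norm, which truncation can only decrease. -/

section WeightedSquareNorm

variable {m n α : Type*} [Fintype m] [Fintype n] [SeminormedAddCommGroup α]

lemma sum_sum_mul_norm_sq_le_of_norm_le {w : m → n → ℝ} (hw : ∀ i j, 0 ≤ w i j)
    {x y : m → n → α} (h : ∀ i j, ‖y i j‖ ≤ ‖x i j‖) :
    ∑ i, ∑ j, w i j * ‖y i j‖ ^ 2 ≤ ∑ i, ∑ j, w i j * ‖x i j‖ ^ 2 := by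
  gcongr with i _ j _
  · exact hw i j
  · exact h i j

lemma sum_sum_mul_norm_sq_le_mul_of_support {w w' : m → n → ℝ} {s : ℝ} {y : m → n → α}
    (h : ∀ i j, y i j ≠ 0 → w' i j ≤ s * w i j) :
    ∑ i, ∑ j, w' i j * ‖y i j‖ ^ 2 ≤ s * ∑ i, ∑ j, w i j * ‖y i j‖ ^ 2 := by
  simp only [mul_sum, ← mul_assoc]
  refine sum_le_sum fun i _ => sum_le_sum fun j _ => ?_
  by_cases hy : y i j = 0
  · simp [hy]
  · exact mul_le_mul_of_nonneg_right (h i j hy) (sq_nonneg _)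

end WeightedSquareNorm

lemma Real.sqrt_mul_le_mul_of_le_sq_mul {a b s : ℝ} (ha : 0 ≤ a) (hs : 0 ≤ s)
    (h : b ≤ s ^ 2 * a) : √(a * b) ≤ s * a :=
  calc √(a * b) ≤ √((s * a) ^ 2) := Real.sqrt_le_sqrt (by nlinarith)
    _ = s * a := Real.sqrt_sq (by positivity)

theorem truncation_bound_general {N : ℕ} {H : Type*}
    [NormedAddCommGroup H] [InnerProductSpace ℂ H]
    (u : Matrix (Fin N) (Fin N) ℂ →ₗ[ℂ] H) (K : ℝ)
    (lam : Fin N → ℝ) (hlam : ∀ i, 0 ≤ lam i)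
    (hu : ∀ x : Matrix (Fin N) (Fin N) ℂ,
      ‖u x‖ ^ 2 ≤ K ^ 2 * Real.sqrt
        ((∑ i, ∑ j, lam i * ‖x i j‖ ^ 2) *
         (∑ i, ∑ j, lam j * ‖x i j‖ ^ 2)))
    (t : ℝ) (ht : 2 ≤ t) :
    ∀ x : Matrix (Fin N) (Fin N) ℂ,
      ‖u (Matrix.of fun i j => if lam i > t ^ 2 * lam j then x i j else 0)‖ ^ 2 ≤
        K ^ 2 * t⁻¹ * ∑ i, ∑ j, lam i * ‖x i j‖ ^ 2 := by
  intro x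
  set y : Matrix (Fin N) (Fin N) ℂ :=
    Matrix.of fun i j => if lam i > t ^ 2 * lam j then x i j else 0
  have ht₀ : 0 < t := by linarith
  have hy_le : ∀ i j, ‖y i j‖ ≤ ‖x i j‖ := fun i j => by
    by_cases h : lam i > t ^ 2 * lam j <;> simp [y, h]
  have hy_supp : ∀ i j, y i j ≠ 0 → lam j ≤ t⁻¹ ^ 2 * lam i := fun i j hy => by
    have h : t ^ 2 * lam j < lam i := by by_contra h; simp [y, h] at hy
    rw [inv_pow, inv_mul_eq_div, le_div_iff₀ (by positivity)]
    linarith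
  have hA₀ : 0 ≤ ∑ i, ∑ j, lam i * ‖y i j‖ ^ 2 :=
    sum_nonneg fun i _ => sum_nonneg fun j _ => mul_nonneg (hlam i) (sq_nonneg _)
  calc ‖u y‖ ^ 2
      ≤ K ^ 2 * √((∑ i, ∑ j, lam i * ‖y i j‖ ^ 2) * ∑ i, ∑ j, lam j * ‖y i j‖ ^ 2) := hu y
    _ ≤ K ^ 2 * (t⁻¹ * ∑ i, ∑ j, lam i * ‖y i j‖ ^ 2) := by
      gcongr
      exact Real.sqrt_mul_le_mul_of_le_sq_mul hA₀ (by positivity)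
        (sum_sum_mul_norm_sq_le_mul_of_support hy_supp)
    _ ≤ K ^ 2 * (t⁻¹ * ∑ i, ∑ j, lam i * ‖x i j‖ ^ 2) := by
      gcongr ?_ * (?_ * ?_)
      exact sum_sum_mul_norm_sq_le_of_norm_le (fun i _ => hlam i) hy_le
    _ = K ^ 2 * t⁻¹ * ∑ i, ∑ j, lam i * ‖x i j‖ ^ 2 := by ring

/-- Suppose `λᵢ ≥ 0`, `Σ λᵢ = 1`, and `‖u(x)‖² ≤ K² (Σᵢⱼ λᵢ|xᵢⱼ|² · Σᵢⱼ λⱼ|xᵢⱼ|²)^{1/2}`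
for every `x ∈ M_N(ℂ)`.  Fix `t ≥ 2` and let `S(2) = {(i,j) : λᵢ > t² λⱼ}`.  Then the
truncation `u₂(x) = u(Σ_{(i,j) ∈ S(2)} xᵢⱼ eᵢⱼ)` satisfies
`‖u₂(x)‖² ≤ K² t⁻¹ Σᵢⱼ λᵢ |xᵢⱼ|²`. -/
theorem truncation_bound {N : ℕ} {H : Type*}
    [NormedAddCommGroup H] [InnerProductSpace ℂ H]
    (u : Matrix (Fin N) (Fin N) ℂ →ₗ[ℂ] H) (K : ℝ) (hK : 0 ≤ K)
    (lam : Fin N → ℝ) (hlam : ∀ i, 0 ≤ lam i) (hsum : ∑ i, lam i = 1)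
    (hu : ∀ x : Matrix (Fin N) (Fin N) ℂ,
      ‖u x‖ ^ 2 ≤ K ^ 2 * Real.sqrt
        ((∑ i, ∑ j, lam i * ‖x i j‖ ^ 2) *
         (∑ i, ∑ j, lam j * ‖x i j‖ ^ 2)))
    (t : ℝ) (ht : 2 ≤ t) :
    ∀ x : Matrix (Fin N) (Fin N) ℂ,
      ‖u (Matrix.of fun i j => if lam i > t ^ 2 * lam j then x i j else 0)‖ ^ 2 ≤
        K ^ 2 * t⁻¹ * ∑ i, ∑ j, lam i * ‖x i j‖ ^ 2 :=
  truncation_bound_general u K lam hlam hu t ht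
end

section
/- Let f be a state on a C*-algebra A and u : E → H a linear map from a subspace E ⊆ A to a Hilbert space satisfying ‖u(x)‖² ≤ K²(f(xx*)f(x*x))^{1/2} for all x ∈ E. Then for all x, y ∈ E, |⟨u(x), u(y)⟩| ≤ (K²/2)(f(xx*)^{1/2}f(y*y)^{1/2} + f(x*x)^{1/2}f(yy*)^{1/2}). -/
open scoped InnerProductSpace

/-- Let `f` be a state on a C*-algebra `A` and `u : E → H` a linear map on a subspace
`E ⊆ A` with `‖u(x)‖² ≤ K² (f(xx*) f(x*x))^{1/2}` for all `x ∈ E`.  Then for all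
`x, y ∈ E`:
`|⟨u(x), u(y)⟩| ≤ (K²/2)(f(xx*)^{1/2} f(y*y)^{1/2} + f(x*x)^{1/2} f(yy*)^{1/2})`. -/
theorem inner_bound_of_state_bound {A : Type*} [NormedRing A] [StarRing A]
    [CStarRing A] [NormedAlgebra ℂ A] [StarModule ℂ A] [CompleteSpace A]
    [PartialOrder A] [StarOrderedRing A]
    {H : Type*} [NormedAddCommGroup H] [InnerProductSpace ℂ H]
    (f : A →ₗ[ℂ] ℂ)
    (hf_pos : ∀ a : A, 0 ≤ a → ∃ r : ℝ, 0 ≤ r ∧ f a = (r : ℂ))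
    (hf_one : f 1 = 1)
    (E : Submodule ℂ A) (u : E →ₗ[ℂ] H) (K : ℝ) (hK : 0 ≤ K)
    (hu : ∀ x : E, ‖u x‖ ^ 2 ≤
      K ^ 2 * Real.sqrt ((f ((x : A) * star (x : A))).re *
                          (f (star (x : A) * (x : A))).re)) :
    ∀ x y : E, ‖⟪u x, u y⟫_ℂ‖ ≤
      (K ^ 2 / 2) *
        (Real.sqrt (f ((x : A) * star (x : A))).re *
            Real.sqrt (f (star (y : A) * (y : A))).re +
         Real.sqrt (f (star (x : A) * (x : A))).re *
            Real.sqrt (f ((y : A) * star (y : A))).re) := by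
  intro x y
  -- nonnegativity of the four state values
  have hre : ∀ a : A, 0 ≤ a → 0 ≤ (f a).re := by
    intro a ha
    obtain ⟨r, hr, hfr⟩ := hf_pos a ha
    rw [hfr]; simpa using hr
  have ha : 0 ≤ (f ((x : A) * star (x : A))).re := hre _ (mul_star_self_nonneg _)
  have hb : 0 ≤ (f (star (x : A) * (x : A))).re := hre _ (star_mul_self_nonneg _)
  have hc : 0 ≤ (f (star (y : A) * (y : A))).re := hre _ (star_mul_self_nonneg _)
  have hd : 0 ≤ (f ((y : A) * star (y : A))).re := hre _ (mul_star_self_nonneg _)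
  set a := (f ((x : A) * star (x : A))).re
  set b := (f (star (x : A) * (x : A))).re
  set c := (f (star (y : A) * (y : A))).re
  set d := (f ((y : A) * star (y : A))).re
  have hP := hu x
  have hQ := hu y
  have hsab : Real.sqrt (a * b) = Real.sqrt a * Real.sqrt b := Real.sqrt_mul ha b
  have hsdc : Real.sqrt (d * c) = Real.sqrt d * Real.sqrt c := Real.sqrt_mul hd c
  rw [hsab] at hP
  rw [hsdc] at hQ
  have h1 : ‖⟪u x, u y⟫_ℂ‖ ≤ ‖u x‖ * ‖u y‖ := norm_inner_le_norm _ _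
  set P := ‖u x‖
  set Q := ‖u y‖
  have hPn : 0 ≤ P := norm_nonneg _
  have hQn : 0 ≤ Q := norm_nonneg _
  set sa := Real.sqrt a
  set sb := Real.sqrt b
  set sc := Real.sqrt c
  set sd := Real.sqrt d
  have hsa : 0 ≤ sa := Real.sqrt_nonneg _
  have hsb : 0 ≤ sb := Real.sqrt_nonneg _
  have hsc : 0 ≤ sc := Real.sqrt_nonneg _
  have hsd : 0 ≤ sd := Real.sqrt_nonneg _
  have hK2 : 0 ≤ K ^ 2 := sq_nonneg K
  have key : P * Q ≤ K ^ 2 / 2 * (sa * sc + sb * sd) := by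
    have hR : 0 ≤ K ^ 2 / 2 * (sa * sc + sb * sd) := by positivity
    have hsq : (P * Q) ^ 2 ≤ (K ^ 2 / 2 * (sa * sc + sb * sd)) ^ 2 := by
      have h2 : P ^ 2 * Q ^ 2 ≤ (K ^ 2 * (sa * sb)) * (K ^ 2 * (sd * sc)) :=
        mul_le_mul hP hQ (sq_nonneg Q) (by positivity)
      nlinarith [sq_nonneg (sa * sc - sb * sd), mul_nonneg hK2 hK2]
    calc P * Q = Real.sqrt ((P * Q) ^ 2) := by
            rw [Real.sqrt_sq (mul_nonneg hPn hQn)]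
      _ ≤ Real.sqrt ((K ^ 2 / 2 * (sa * sc + sb * sd)) ^ 2) := Real.sqrt_le_sqrt hsq
      _ = K ^ 2 / 2 * (sa * sc + sb * sd) := Real.sqrt_sq hR
  linarith
end

section
/- Let U : E × F → ℂ be a bilinear form on subspaces E ⊆ A, F ⊆ B of C*-algebras, and suppose there exist states f₁, f₂ on A and g₁, g₂ on B with |U(a,b)| ≤ K[(f₁(aa*)g₁(b*b))^{1/2} + (f₂(a*a)g₂(bb*))^{1/2}] for all (a,b). Then for any finite sequences (aᵢ, bᵢ) in E × F and any positive reals λᵢ: |Σᵢ U(aᵢ,bᵢ)| ≤ K[‖Σ aᵢaᵢ*‖^{1/2}‖Σ bᵢ*bᵢ‖^{1/2} + ‖Σ λᵢ aᵢ*aᵢ‖^{1/2}‖Σ λᵢ^{-1} bᵢbᵢ*‖^{1/2}]. -/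
set_option linter.unusedSectionVars false

section Aux
variable {C : Type*} [NormedRing C] [StarRing C] [CStarRing C] [NormedAlgebra ℂ C]
    [StarModule ℂ C] [CompleteSpace C] [PartialOrder C] [StarOrderedRing C]

lemma my_state_re_le_norm (f : C →ₗ[ℂ] ℂ)
    (hf : ∀ x : C, 0 ≤ x → ∃ r : ℝ, 0 ≤ r ∧ f x = (r : ℂ)) (hf1 : f 1 = 1)
    (x : C) (hx : 0 ≤ x) : (f x).re ≤ ‖x‖ := by
  letI : CStarAlgebra C := ⟨⟩
  have hle : x ≤ algebraMap ℝ C ‖x‖ := IsSelfAdjoint.le_algebraMap_norm_self hx.isSelfAdjoint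
  obtain ⟨r, hr, hfr⟩ := hf _ (sub_nonneg.2 hle)
  obtain ⟨r', hr', hfr'⟩ := hf _ hx
  have halg : f (algebraMap ℝ C ‖x‖) = (‖x‖ : ℂ) := by
    rw [IsScalarTower.algebraMap_apply ℝ ℂ C, Algebra.algebraMap_eq_smul_one, map_smul, hf1,
      smul_eq_mul, mul_one]
    norm_num
  have := map_sub f (algebraMap ℝ C ‖x‖) x
  rw [hfr, halg, hfr'] at this
  have hre : ‖x‖ - r' = r := by exact_mod_cast this.symm
  rw [hfr']
  simp only [Complex.ofReal_re]
  linarith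

lemma my_re_nonneg (f : C →ₗ[ℂ] ℂ)
    (hf : ∀ x : C, 0 ≤ x → ∃ r : ℝ, 0 ≤ r ∧ f x = (r : ℂ))
    (x : C) (hx : 0 ≤ x) : 0 ≤ (f x).re := by
  obtain ⟨r, hr, hfr⟩ := hf x hx
  simp [hfr, hr]

lemma my_smul_star_mul_self_nonneg (r : ℝ) (hr : 0 ≤ r) (a : C) :
    0 ≤ (r : ℂ) • (star a * a) := by
  have h : (r : ℂ) • (star a * a)
      = star ((Real.sqrt r : ℂ) • a) * ((Real.sqrt r : ℂ) • a) := by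
    rw [star_smul, smul_mul_assoc, mul_smul_comm, smul_smul, Complex.star_def,
      Complex.conj_ofReal, ← Complex.ofReal_mul, Real.mul_self_sqrt hr]
  rw [h]; exact star_mul_self_nonneg _

lemma my_smul_mul_star_self_nonneg (r : ℝ) (hr : 0 ≤ r) (a : C) :
    0 ≤ (r : ℂ) • (a * star a) := by
  have h : (r : ℂ) • (a * star a)
      = ((Real.sqrt r : ℂ) • a) * star ((Real.sqrt r : ℂ) • a) := by
    rw [star_smul, mul_smul_comm, smul_mul_assoc, smul_smul, Complex.star_def,
      Complex.conj_ofReal, ← Complex.ofReal_mul, Real.mul_self_sqrt hr]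
  rw [h]; exact mul_star_self_nonneg _

end Aux

lemma my_cs_step (n : ℕ) (p q : Fin n → ℝ) (hp : ∀ i, 0 ≤ p i) (hq : ∀ i, 0 ≤ q i)
    (Np Nq : ℝ) (hNp : ∑ i, p i ≤ Np) (hNq : ∑ i, q i ≤ Nq) :
    ∑ i, Real.sqrt (p i * q i) ≤ Real.sqrt Np * Real.sqrt Nq := by
  calc ∑ i, Real.sqrt (p i * q i) = ∑ i, Real.sqrt (p i) * Real.sqrt (q i) := by
        simp_rw [fun i => Real.sqrt_mul (hp i) (q i)]
    _ ≤ Real.sqrt (∑ i, p i) * Real.sqrt (∑ i, q i) :=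
        Real.sum_sqrt_mul_sqrt_le _ hp hq
    _ ≤ Real.sqrt Np * Real.sqrt Nq :=
        mul_le_mul (Real.sqrt_le_sqrt hNp) (Real.sqrt_le_sqrt hNq)
          (Real.sqrt_nonneg _) (Real.sqrt_nonneg _)



/-- Let `U : E × F → ℂ` be a bilinear form on subspaces `E ⊆ A`, `F ⊆ B` of
C*-algebras, and suppose there exist states `f₁, f₂` on `A` and `g₁, g₂` on `B` with
`|U(a,b)| ≤ K[(f₁(aa*) g₁(b*b))^{1/2} + (f₂(a*a) g₂(bb*))^{1/2}]`.  Then for any finite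
sequences `(aᵢ, bᵢ)` in `E × F` and any `λᵢ > 0`:
`|Σᵢ U(aᵢ,bᵢ)| ≤ K[‖Σ aᵢaᵢ*‖^{1/2} ‖Σ bᵢ*bᵢ‖^{1/2}
                    + ‖Σ λᵢ aᵢ*aᵢ‖^{1/2} ‖Σ λᵢ⁻¹ bᵢbᵢ*‖^{1/2}]`. -/
theorem bilinear_sum_bound_of_state_bound
    {A : Type*} [NormedRing A] [StarRing A] [CStarRing A] [NormedAlgebra ℂ A]
    [StarModule ℂ A] [CompleteSpace A] [PartialOrder A] [StarOrderedRing A]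
    {B : Type*} [NormedRing B] [StarRing B] [CStarRing B] [NormedAlgebra ℂ B]
    [StarModule ℂ B] [CompleteSpace B] [PartialOrder B] [StarOrderedRing B]
    (E : Submodule ℂ A) (F : Submodule ℂ B)
    (U : E →ₗ[ℂ] F →ₗ[ℂ] ℂ) (K : ℝ) (hK : 0 ≤ K)
    (f₁ f₂ : A →ₗ[ℂ] ℂ) (g₁ g₂ : B →ₗ[ℂ] ℂ)
    (hf₁ : ∀ a : A, 0 ≤ a → ∃ r : ℝ, 0 ≤ r ∧ f₁ a = (r : ℂ)) (hf₁1 : f₁ 1 = 1)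
    (hf₂ : ∀ a : A, 0 ≤ a → ∃ r : ℝ, 0 ≤ r ∧ f₂ a = (r : ℂ)) (hf₂1 : f₂ 1 = 1)
    (hg₁ : ∀ b : B, 0 ≤ b → ∃ r : ℝ, 0 ≤ r ∧ g₁ b = (r : ℂ)) (hg₁1 : g₁ 1 = 1)
    (hg₂ : ∀ b : B, 0 ≤ b → ∃ r : ℝ, 0 ≤ r ∧ g₂ b = (r : ℂ)) (hg₂1 : g₂ 1 = 1)
    (hU : ∀ (a : E) (b : F), ‖U a b‖ ≤
      K * (Real.sqrt ((f₁ ((a : A) * star (a : A))).re *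
                      (g₁ (star (b : B) * (b : B))).re) +
           Real.sqrt ((f₂ (star (a : A) * (a : A))).re *
                      (g₂ ((b : B) * star (b : B))).re))) :
    ∀ (n : ℕ) (a : Fin n → E) (b : Fin n → F) (lam : Fin n → ℝ),
      (∀ i, 0 < lam i) →
      ‖∑ i, U (a i) (b i)‖ ≤
        K * (Real.sqrt ‖∑ i, (a i : A) * star (a i : A)‖ *
               Real.sqrt ‖∑ i, star (b i : B) * (b i : B)‖ +
             Real.sqrt ‖∑ i, (lam i : ℂ) • (star (a i : A) * (a i : A))‖ *
               Real.sqrt ‖∑ i, ((lam i : ℂ))⁻¹ • ((b i : B) * star (b i : B))‖) := by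
  intro n a b lam hlam
  -- unweighted sums bounded by norms
  have key1 : ∑ i, (f₁ ((a i : A) * star (a i : A))).re ≤
      ‖∑ i, (a i : A) * star (a i : A)‖ := by
    have hsum := my_state_re_le_norm f₁ hf₁ hf₁1 (∑ i, (a i : A) * star (a i : A))
      (Finset.sum_nonneg fun i _ => mul_star_self_nonneg (a i : A))
    rwa [map_sum, Complex.re_sum] at hsum
  have key2 : ∑ i, (g₁ (star (b i : B) * (b i : B))).re ≤
      ‖∑ i, star (b i : B) * (b i : B)‖ := by
    have hsum := my_state_re_le_norm g₁ hg₁ hg₁1 (∑ i, star (b i : B) * (b i : B))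
      (Finset.sum_nonneg fun i _ => star_mul_self_nonneg (b i : B))
    rwa [map_sum, Complex.re_sum] at hsum
  -- weighted sums
  have key3 : ∑ i, lam i * (f₂ (star (a i : A) * (a i : A))).re ≤
      ‖∑ i, (lam i : ℂ) • (star (a i : A) * (a i : A))‖ := by
    have hsum := my_state_re_le_norm f₂ hf₂ hf₂1
      (∑ i, (lam i : ℂ) • (star (a i : A) * (a i : A)))
      (Finset.sum_nonneg fun i _ => my_smul_star_mul_self_nonneg (lam i) (hlam i).le _)
    rw [map_sum, Complex.re_sum] at hsum
    refine le_trans (le_of_eq (Finset.sum_congr rfl fun i _ => ?_)) hsum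
    rw [map_smul, smul_eq_mul, Complex.re_ofReal_mul]
  have key4 : ∑ i, (lam i)⁻¹ * (g₂ ((b i : B) * star (b i : B))).re ≤
      ‖∑ i, ((lam i : ℂ))⁻¹ • ((b i : B) * star (b i : B))‖ := by
    have hsum := my_state_re_le_norm g₂ hg₂ hg₂1
      (∑ i, ((lam i : ℂ))⁻¹ • ((b i : B) * star (b i : B)))
      (Finset.sum_nonneg fun i _ => by
        rw [← Complex.ofReal_inv]
        exact my_smul_mul_star_self_nonneg (lam i)⁻¹ (inv_nonneg.2 (hlam i).le) _)
    rw [map_sum, Complex.re_sum] at hsum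
    refine le_trans (le_of_eq (Finset.sum_congr rfl fun i _ => ?_)) hsum
    rw [← Complex.ofReal_inv, map_smul, smul_eq_mul, Complex.re_ofReal_mul]
  calc ‖∑ i, U (a i) (b i)‖ ≤ ∑ i, ‖U (a i) (b i)‖ := norm_sum_le _ _
    _ ≤ ∑ i, K * (Real.sqrt ((f₁ ((a i : A) * star (a i : A))).re *
            (g₁ (star (b i : B) * (b i : B))).re) +
          Real.sqrt ((f₂ (star (a i : A) * (a i : A))).re *
            (g₂ ((b i : B) * star (b i : B))).re)) :=
        Finset.sum_le_sum fun i _ => hU (a i) (b i)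
    _ = K * ((∑ i, Real.sqrt ((f₁ ((a i : A) * star (a i : A))).re *
            (g₁ (star (b i : B) * (b i : B))).re)) +
          ∑ i, Real.sqrt ((f₂ (star (a i : A) * (a i : A))).re *
            (g₂ ((b i : B) * star (b i : B))).re)) := by
        rw [← Finset.mul_sum, Finset.sum_add_distrib]
    _ ≤ K * (Real.sqrt ‖∑ i, (a i : A) * star (a i : A)‖ *
            Real.sqrt ‖∑ i, star (b i : B) * (b i : B)‖ +
          Real.sqrt ‖∑ i, (lam i : ℂ) • (star (a i : A) * (a i : A))‖ *
            Real.sqrt ‖∑ i, ((lam i : ℂ))⁻¹ • ((b i : B) * star (b i : B))‖) := by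
        refine mul_le_mul_of_nonneg_left (add_le_add ?_ ?_) hK
        · exact my_cs_step n _ _
            (fun i => my_re_nonneg f₁ hf₁ _ (mul_star_self_nonneg _))
            (fun i => my_re_nonneg g₁ hg₁ _ (star_mul_self_nonneg _)) _ _ key1 key2
        · have heq : ∀ i : Fin n,
              Real.sqrt ((f₂ (star (a i : A) * (a i : A))).re *
                (g₂ ((b i : B) * star (b i : B))).re) =
              Real.sqrt ((lam i * (f₂ (star (a i : A) * (a i : A))).re) *
                ((lam i)⁻¹ * (g₂ ((b i : B) * star (b i : B))).re)) := fun i => by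
            congr 1
            rw [mul_mul_mul_comm, mul_inv_cancel₀ (hlam i).ne', one_mul]
          rw [Finset.sum_congr rfl fun i _ => heq i]
          exact my_cs_step n _ _
            (fun i => mul_nonneg (hlam i).le
              (my_re_nonneg f₂ hf₂ _ (star_mul_self_nonneg _)))
            (fun i => mul_nonneg (inv_nonneg.2 (hlam i).le)
              (my_re_nonneg g₂ hg₂ _ (mul_star_self_nonneg _))) _ _ key3 key4
end
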